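/- (Remark 2(iv): minimal false positive rate) The RDC H_q minimizes the false positive rate among all RDCs with predicted positive rate at least α: for every RDC H with E[H] ≥ α, E[H_q·1_{A^c}]/P[A^c] ≤ E[H·1_{A^c}]/P[A^c]. -/

import Mathlib

open MeasureTheory Set

/-- A randomized decision classifier (RDC): an `ℋ`-measurable random variable
with values in the unit interval. -/
def IsRDC {Ω : Type*} (ℋ : MeasurableSpace Ω) (H : Ω → ℝ) : Prop :=
  Measurable[ℋ] H ∧ ∀ ω, H ω ∈ Set.Icc (0 : ℝ) 1

/-- The optimal RDC `H_q` obtained by thresholding the posterior probability `η` at `q`,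
with randomization on the event `{η = q}` calibrated so that the predicted positive
rate equals `α`. -/
noncomputable def Hq {Ω : Type*} [MeasurableSpace Ω] (P : Measure Ω) (η : Ω → ℝ)
    (α q : ℝ) : Ω → ℝ := fun ω =>
  if P {ω' | η ω' = q} = 0 then {ω' | η ω' > q}.indicator (fun _ => (1 : ℝ)) ω
  else {ω' | η ω' > q}.indicator (fun _ => (1 : ℝ)) ω +
    ((α - (P {ω' | η ω' > q}).toReal) / (P {ω' | η ω' = q}).toReal) *
      {ω' | η ω' = q}.indicator (fun _ => (1 : ℝ)) ω

/-- Expected misclassification cost `L_{a,b}(H) = a·E[(1−H)·1_A] + b·E[H·1_{Aᶜ}]`. -/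
noncomputable def cost {Ω : Type*} [MeasurableSpace Ω] (P : Measure Ω) (A : Set Ω)
    (a b : ℝ) (H : Ω → ℝ) : ℝ :=
  a * ∫ ω, (1 - H ω) * A.indicator (fun _ => (1 : ℝ)) ω ∂P +
    b * ∫ ω, H ω * Aᶜ.indicator (fun _ => (1 : ℝ)) ω ∂P

/-!
Both `H` and `H_q` are `ℋ`-measurable, so `E[H 1_{Aᶜ}] = E[H (1 - η)]`. Since `H_q` is `1` above
the threshold `q` and `0` below it, `(H - H_q)(q - η) ≥ 0` pointwise (the Neyman–Pearson argument),
whence `E[(H - H_q)(1 - η)] ≥ (1 - q)(E[H] - E[H_q]) ≥ 0`, using `q ≤ 1` and `E[H_q] ≤ α ≤ E[H]`.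
-/

section RDC

variable {Ω : Type*} {ℋ : MeasurableSpace Ω}

lemma IsRDC.mono {m : MeasurableSpace Ω} {H : Ω → ℝ} (hH : IsRDC ℋ H) (hℋ : ℋ ≤ m) :
    IsRDC m H :=
  ⟨hH.1.mono hℋ le_rfl, hH.2⟩

lemma IsRDC.abs_le_one {H : Ω → ℝ} (hH : IsRDC ℋ H) (ω : Ω) : |H ω| ≤ 1 :=
  abs_le.2 ⟨by linarith [(hH.2 ω).1], (hH.2 ω).2⟩

lemma IsRDC.mul {G H : Ω → ℝ} (hG : IsRDC ℋ G) (hH : IsRDC ℋ H) :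
    IsRDC ℋ (fun ω => G ω * H ω) :=
  ⟨hG.1.mul hH.1, fun ω => ⟨mul_nonneg (hG.2 ω).1 (hH.2 ω).1,
    mul_le_one₀ (hG.2 ω).2 (hH.2 ω).1 (hH.2 ω).2⟩⟩

lemma IsRDC.one_sub {H : Ω → ℝ} (hH : IsRDC ℋ H) : IsRDC ℋ (fun ω => 1 - H ω) :=
  ⟨measurable_const.sub hH.1, fun ω => ⟨by linarith [(hH.2 ω).2], by linarith [(hH.2 ω).1]⟩⟩

lemma isRDC_indicator_one {A : Set Ω} (hA : MeasurableSet[ℋ] A) :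
    IsRDC ℋ (A.indicator fun _ => (1 : ℝ)) :=
  ⟨measurable_const.indicator hA, fun ω => by
    by_cases h : ω ∈ A <;> simp [h]⟩

lemma IsRDC.integrable [m : MeasurableSpace Ω] {P : Measure Ω} [IsFiniteMeasure P] {H : Ω → ℝ}
    (hH : IsRDC m H) : Integrable H P :=
  .of_bound hH.1.aestronglyMeasurable 1 (ae_of_all _ hH.abs_le_one)

end RDC

lemma integral_mul_indicator_compl_eq {Ω : Type*} {ℋ : MeasurableSpace Ω} [m : MeasurableSpace Ω]
    {P : Measure Ω} [IsFiniteMeasure P] (hℋ : ℋ ≤ m) {A : Set Ω} (hA : MeasurableSet A)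
    {η : Ω → ℝ} (hη : IsRDC ℋ η)
    (hηcond : ∀ Z : Ω → ℝ, Measurable[ℋ] Z → (∃ C, ∀ ω, |Z ω| ≤ C) →
      ∫ ω, η ω * Z ω ∂P = ∫ ω, A.indicator (fun _ => (1 : ℝ)) ω * Z ω ∂P)
    {Z : Ω → ℝ} (hZ : IsRDC ℋ Z) :
    ∫ ω, Z ω * Aᶜ.indicator (fun _ => (1 : ℝ)) ω ∂P = ∫ ω, Z ω * (1 - η ω) ∂P := by
  have hZm := hZ.mono hℋ
  calc ∫ ω, Z ω * Aᶜ.indicator (fun _ => (1 : ℝ)) ω ∂P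
      = ∫ ω, (Z ω - A.indicator (fun _ => (1 : ℝ)) ω * Z ω) ∂P := by
        congr with ω
        by_cases h : ω ∈ A <;> simp [h]
    _ = ∫ ω, Z ω ∂P - ∫ ω, η ω * Z ω ∂P := by
        rw [integral_sub hZm.integrable ((isRDC_indicator_one hA).mul hZm).integrable,
          hηcond Z hZ.1 ⟨1, hZ.abs_le_one⟩]
    _ = ∫ ω, Z ω * (1 - η ω) ∂P := by
        rw [← integral_sub hZm.integrable ((hη.mono hℋ).mul hZm).integrable]
        congr with ω
        ring

lemma integral_mul_one_sub_le_of_threshold {Ω : Type*} [m : MeasurableSpace Ω] {P : Measure Ω}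
    [IsFiniteMeasure P] {G H η : Ω → ℝ} (hG : IsRDC m G) (hH : IsRDC m H) (hη : IsRDC m η)
    {q : ℝ} (hq : q ≤ 1) (hG_gt : ∀ ω, q < η ω → G ω = 1) (hG_lt : ∀ ω, η ω < q → G ω = 0)
    (hGH : ∫ ω, G ω ∂P ≤ ∫ ω, H ω ∂P) :
    ∫ ω, G ω * (1 - η ω) ∂P ≤ ∫ ω, H ω * (1 - η ω) ∂P := by
  have hpt : ∀ ω, (1 - q) * (H ω - G ω) ≤ H ω * (1 - η ω) - G ω * (1 - η ω) := by
    intro ω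
    have : 0 ≤ (H ω - G ω) * (q - η ω) := by
      rcases lt_trichotomy (η ω) q with h | h | h
      · rw [hG_lt ω h]; nlinarith [(hH.2 ω).1]
      · simp [h]
      · rw [hG_gt ω h]; nlinarith [(hH.2 ω).2]
    linarith
  have hHi : Integrable H P := hH.integrable
  have hGi : Integrable G P := hG.integrable
  have hHηi : Integrable (fun ω => H ω * (1 - η ω)) P := (hH.mul hη.one_sub).integrable
  have hGηi : Integrable (fun ω => G ω * (1 - η ω)) P := (hG.mul hη.one_sub).integrable
  refine sub_nonneg.1 ?_
  calc 0 ≤ (1 - q) * (∫ ω, H ω ∂P - ∫ ω, G ω ∂P) := mul_nonneg (by linarith) (by linarith)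
    _ = ∫ ω, (1 - q) * (H ω - G ω) ∂P := by rw [integral_const_mul, integral_sub hHi hGi]
    _ ≤ ∫ ω, (H ω * (1 - η ω) - G ω * (1 - η ω)) ∂P :=
        integral_mono ((hHi.sub hGi).const_mul (1 - q)) (hHηi.sub hGηi) hpt
    _ = _ := integral_sub hHηi hGηi

section Hq

variable {Ω : Type*} {ℋ : MeasurableSpace Ω} [m : MeasurableSpace Ω]
  (P : Measure Ω) (η : Ω → ℝ) (α q : ℝ)

/-- The randomization probability of `Hq` on the tie `{η = q}`. When the tie is null, `x / 0 = 0`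
makes it `0`, so the `if` in `Hq` is immaterial. -/
noncomputable def tieWeight : ℝ := (α - P.real {ω | η ω > q}) / P.real {ω | η ω = q}

lemma Hq_apply (ω : Ω) :
    Hq P η α q ω = {ω' | η ω' > q}.indicator (fun _ => (1 : ℝ)) ω +
      tieWeight P η α q * {ω' | η ω' = q}.indicator (fun _ => (1 : ℝ)) ω := by
  unfold Hq tieWeight
  split_ifs with h
  · simp [measureReal_def, h]
  · rfl

variable {P η α q} {ω : Ω}

lemma Hq_eq_one_of_lt (h : q < η ω) : Hq P η α q ω = 1 := by
  simp [Hq_apply, h, h.ne']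

lemma Hq_eq_zero_of_lt (h : η ω < q) : Hq P η α q ω = 0 := by
  simp [Hq_apply, h.not_gt, h.ne]

lemma Hq_eq_tieWeight (h : η ω = q) : Hq P η α q ω = tieWeight P η α q := by
  simp [Hq_apply, h]

variable [IsProbabilityMeasure P]

lemma quantile_le_one (hη : ∀ ω, η ω ≤ 1) (hα : 0 < α)
    (hq₁ : P.real {ω | η ω < q} ≤ 1 - α) : q ≤ 1 := by
  by_contra! h
  have : {ω | η ω < q} = univ := eq_univ_of_forall fun ω => (hη ω).trans_lt h
  rw [this, probReal_univ] at hq₁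
  linarith

lemma measureReal_gt_le_of_quantile (hη : Measurable η) (hq₂ : 1 - α ≤ P.real {ω | η ω ≤ q}) :
    P.real {ω | η ω > q} ≤ α := by
  have : {ω | η ω > q} = {ω | η ω ≤ q}ᶜ := by ext; simp
  rw [this, probReal_compl_eq_one_sub (measurableSet_le hη measurable_const)]
  linarith

lemma le_measureReal_gt_add_eq_of_quantile (hη : Measurable η)
    (hq₁ : P.real {ω | η ω < q} ≤ 1 - α) :
    α ≤ P.real {ω | η ω > q} + P.real {ω | η ω = q} := by
  have : {ω | η ω < q}ᶜ = {ω | η ω > q} ∪ {ω | η ω = q} := by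
    ext; simp [le_iff_lt_or_eq, eq_comm]
  have heq : MeasurableSet {ω | η ω = q} := hη (measurableSet_singleton q)
  rw [← measureReal_union (disjoint_left.2 fun _ h => h.ne') heq, ← this,
    probReal_compl_eq_one_sub (measurableSet_lt hη measurable_const)]
  linarith

lemma tieWeight_mem_Icc (hη : Measurable η) (hq₁ : P.real {ω | η ω < q} ≤ 1 - α)
    (hq₂ : 1 - α ≤ P.real {ω | η ω ≤ q}) : tieWeight P η α q ∈ Icc 0 1 :=
  ⟨div_nonneg (sub_nonneg.2 (measureReal_gt_le_of_quantile hη hq₂)) measureReal_nonneg,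
    div_le_one_of_le₀ (by linarith [le_measureReal_gt_add_eq_of_quantile hη hq₁])
      measureReal_nonneg⟩

lemma integral_Hq_le (hη : Measurable η) (hq₂ : 1 - α ≤ P.real {ω | η ω ≤ q}) :
    ∫ ω, Hq P η α q ω ∂P ≤ α := by
  have hgt : MeasurableSet {ω | η ω > q} := measurableSet_lt measurable_const hη
  have heq : MeasurableSet {ω | η ω = q} := hη (measurableSet_singleton q)
  have hint : ∫ ω, Hq P η α q ω ∂P =
      P.real {ω | η ω > q} + tieWeight P η α q * P.real {ω | η ω = q} := by
    simp_rw [Hq_apply]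
    rw [integral_add ((integrable_const 1).indicator hgt)
        (((integrable_const 1).indicator heq).const_mul _), integral_const_mul,
      integral_indicator_const 1 hgt, integral_indicator_const 1 heq]
    simp
  have htie : tieWeight P η α q * P.real {ω | η ω = q} ≤ α - P.real {ω | η ω > q} := by
    by_cases h : P.real {ω | η ω = q} = 0
    · simpa [h] using measureReal_gt_le_of_quantile hη hq₂
    · rw [tieWeight, div_mul_cancel₀ _ h]
  linarith

lemma isRDC_Hq (hℋ : ℋ ≤ m) (hη : Measurable[ℋ] η) (hq₁ : P.real {ω | η ω < q} ≤ 1 - α)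
    (hq₂ : 1 - α ≤ P.real {ω | η ω ≤ q}) : IsRDC ℋ (Hq P η α q) := by
  refine ⟨?_, fun ω => ?_⟩
  · have hgt : MeasurableSet[ℋ] {ω | η ω > q} := measurableSet_lt measurable_const hη
    have heq : MeasurableSet[ℋ] {ω | η ω = q} := hη (measurableSet_singleton q)
    rw [funext (Hq_apply P η α q)]
    exact (measurable_const.indicator hgt).add ((measurable_const.indicator heq).const_mul _)
  rcases lt_trichotomy (η ω) q with h | h | h
  · simp [Hq_eq_zero_of_lt h]
  · rw [Hq_eq_tieWeight h]
    exact tieWeight_mem_Icc (hη.mono hℋ le_rfl) hq₁ hq₂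
  · simp [Hq_eq_one_of_lt h]

end Hq

theorem Hq_min_FPR_general
    {Ω : Type*} (ℋ : MeasurableSpace Ω) [𝒜 : MeasurableSpace Ω]
    (P : Measure Ω) [IsProbabilityMeasure P] (hℋ : ℋ ≤ 𝒜)
    (A : Set Ω) (hA : MeasurableSet A)
    (η : Ω → ℝ) (hηm : Measurable[ℋ] η) (hη01 : ∀ ω, η ω ∈ Set.Icc (0 : ℝ) 1)
    (hηcond : ∀ Z : Ω → ℝ, Measurable[ℋ] Z → (∃ C, ∀ ω, |Z ω| ≤ C) →
      ∫ ω, η ω * Z ω ∂P = ∫ ω, A.indicator (fun _ => (1 : ℝ)) ω * Z ω ∂P)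
    (α : ℝ) (hα : α ∈ Set.Ioo (0 : ℝ) 1)
    (q : ℝ) (hq₁ : (P {ω | η ω < q}).toReal ≤ 1 - α)
    (hq₂ : 1 - α ≤ (P {ω | η ω ≤ q}).toReal)
 :
    ∀ H : Ω → ℝ, IsRDC ℋ H → α ≤ ∫ ω, H ω ∂P →
      (∫ ω, Hq P η α q ω * Aᶜ.indicator (fun _ => (1 : ℝ)) ω ∂P) / (P Aᶜ).toReal
        ≤ (∫ ω, H ω * Aᶜ.indicator (fun _ => (1 : ℝ)) ω ∂P) / (P Aᶜ).toReal := by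
  intro H hH hαH
  have hη : IsRDC ℋ η := ⟨hηm, hη01⟩
  have hG : IsRDC ℋ (Hq P η α q) := isRDC_Hq hℋ hηm hq₁ hq₂
  rw [integral_mul_indicator_compl_eq hℋ hA hη hηcond hG,
    integral_mul_indicator_compl_eq hℋ hA hη hηcond hH]
  refine div_le_div_of_nonneg_right ?_ ENNReal.toReal_nonneg
  exact integral_mul_one_sub_le_of_threshold (hG.mono hℋ) (hH.mono hℋ) (hη.mono hℋ)
    (quantile_le_one (fun ω => (hη01 ω).2) hα.1 hq₁) (fun _ => Hq_eq_one_of_lt)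
    (fun _ => Hq_eq_zero_of_lt)
    ((integral_Hq_le (hηm.mono hℋ le_rfl) hq₂).trans hαH)

/-- Remark 2(iv). `H_q` minimizes the false positive rate
`E[H·1_{Aᶜ}]/P[Aᶜ]` among all RDCs with predicted positive rate at least `α`. -/
theorem Hq_min_FPR
    {Ω : Type*} (ℋ : MeasurableSpace Ω) [𝒜 : MeasurableSpace Ω]
    (P : Measure Ω) [IsProbabilityMeasure P] (hℋ : ℋ ≤ 𝒜)
    (A : Set Ω) (hA : MeasurableSet A) (hA0 : 0 < P A) (hA1 : P A < 1)
    (hAH : ¬ MeasurableSet[ℋ] A)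
    (η : Ω → ℝ) (hηm : Measurable[ℋ] η) (hη01 : ∀ ω, η ω ∈ Set.Icc (0 : ℝ) 1)
    (hηcond : ∀ Z : Ω → ℝ, Measurable[ℋ] Z → (∃ C, ∀ ω, |Z ω| ≤ C) →
      ∫ ω, η ω * Z ω ∂P = ∫ ω, A.indicator (fun _ => (1 : ℝ)) ω * Z ω ∂P)
    (α : ℝ) (hα : α ∈ Set.Ioo (0 : ℝ) 1)
    (q : ℝ) (hq₁ : (P {ω | η ω < q}).toReal ≤ 1 - α)
    (hq₂ : 1 - α ≤ (P {ω | η ω ≤ q}).toReal)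
 :
    ∀ H : Ω → ℝ, IsRDC ℋ H → α ≤ ∫ ω, H ω ∂P →
      (∫ ω, Hq P η α q ω * Aᶜ.indicator (fun _ => (1 : ℝ)) ω ∂P) / (P Aᶜ).toReal
        ≤ (∫ ω, H ω * Aᶜ.indicator (fun _ => (1 : ℝ)) ω ∂P) / (P Aᶜ).toReal :=
  Hq_min_FPR_general ℋ (𝒜 := 𝒜) P hℋ A hA η hηm hη01 hηcond α hα q hq₁ hq₂
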